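/- arXiv:1603.04276 — 9 statements merged into one kernel-verified Lean document; each statement's English description precedes it below -/
import Mathlib

section
/- Minimality criterion underlying the brute-force algorithm: let 𝒯 be a set of transition conjuncts with (I,𝒯) ⊢ P, and let R ⊆ 𝒯 be an inductive validity core for (I,𝒯) ⊢ P such that for every x ∈ R there exists a set S with R ⊆ S ⊆ 𝒯 and S \ {x} is not an inductive validity core. Then R is a minimal inductive validity core for (I,𝒯) ⊢ P. -/
/-- A state `s` is reachable in the transition system `(I, T)`. -/
def Reachable {S : Type*} (I : S → Prop) (T : S → S → Prop) (s : S) : Prop :=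
  ∃ n : ℕ, ∃ f : ℕ → S, I (f 0) ∧ (∀ i < n, T (f i) (f (i + 1))) ∧ f n = s

/-- The safety property `P` holds on `(I, T)`: `(I, T) ⊢ P`. -/
def Holds {S : Type*} (I : S → Prop) (T : S → S → Prop) (P : S → Prop) : Prop :=
  ∀ s, Reachable I T s → P s

/-- Transition predicate induced by a set of conjuncts. -/
def conjT {S : Type*} (𝒯 : Set (S → S → Prop)) : S → S → Prop :=
  fun s s' => ∀ t ∈ 𝒯, t s s'

/-- `R` is an inductive validity core for `(I, 𝒯) ⊢ P`. -/
def IsIVC {S : Type*} (I : S → Prop) (𝒯 : Set (S → S → Prop)) (P : S → Prop)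
    (R : Set (S → S → Prop)) : Prop :=
  R ⊆ 𝒯 ∧ Holds I (conjT R) P

/-- `R` is a minimal inductive validity core for `(I, 𝒯) ⊢ P`. -/
def IsMinIVC {S : Type*} (I : S → Prop) (𝒯 : Set (S → S → Prop)) (P : S → Prop)
    (R : Set (S → S → Prop)) : Prop :=
  IsIVC I 𝒯 P R ∧ ∀ M ⊂ R, ¬ IsIVC I 𝒯 P M

/-- Minimality criterion underlying the brute-force algorithm. -/
theorem minimality_criterion {S : Type*} (I : S → Prop) (𝒯 : Set (S → S → Prop)) (P : S → Prop)
    (hTP : Holds I (conjT 𝒯) P)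
    (R : Set (S → S → Prop)) (hR : IsIVC I 𝒯 P R)
    (hcrit : ∀ x ∈ R, ∃ S' : Set (S → S → Prop),
      R ⊆ S' ∧ S' ⊆ 𝒯 ∧ ¬ IsIVC I 𝒯 P (S' \ {x})) :
    IsMinIVC I 𝒯 P R := by
  refine ⟨hR, ?_⟩
  rintro M ⟨hMR, hne⟩ hMIVC
  obtain ⟨x, hxR, hxM⟩ := Set.not_subset.mp hne
  obtain ⟨S', hRS', hS'T, hnot⟩ := hcrit x hxR
  apply hnot
  refine ⟨fun t ht => hS'T ht.1, fun s hs => ?_⟩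
  apply hMIVC.2 s
  obtain ⟨n, f, h0, hstep, hend⟩ := hs
  refine ⟨n, f, h0, fun i hi t ht => hstep i hi t ⟨hRS' (hMR ht), fun h => hxM (h ▸ ht)⟩, hend⟩
end

section
/- Correctness of the brute-force algorithm IVC_BF (Lemma 2): let 𝒯 be a finite set of transition conjuncts with (I,𝒯) ⊢ P, enumerated without repetition as x₁,…,xₙ. Define S₀ = 𝒯 and, for 1 ≤ i ≤ n, Sᵢ = Sᵢ₋₁ \ {xᵢ} if Sᵢ₋₁ \ {xᵢ} is an inductive validity core for (I,𝒯) ⊢ P, and Sᵢ = Sᵢ₋₁ otherwise. Then Sₙ is a minimal inductive validity core for (I,𝒯) ⊢ P. -/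
open Classical in
/-- Lemma 2: correctness of the brute-force algorithm IVC_BF. -/
theorem ivc_bf_correct {S : Type*} (I : S → Prop) (𝒯 : Set (S → S → Prop)) (P : S → Prop)
    (hTP : Holds I (conjT 𝒯) P)
    (n : ℕ) (x : Fin n → (S → S → Prop))
    (hinj : Function.Injective x) (hrange : Set.range x = 𝒯)
    (Sf : ℕ → Set (S → S → Prop))
    (h0 : Sf 0 = 𝒯)
    (hstep : ∀ i : Fin n,
      Sf (i + 1) =
        if IsIVC I 𝒯 P (Sf i \ {x i}) then Sf i \ {x i} else Sf i) :
    IsMinIVC I 𝒯 P (Sf n) := by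
  have holds_mono : ∀ (M R : Set (S → S → Prop)), M ⊆ R →
      Holds I (conjT M) P → Holds I (conjT R) P := by
    intro M R hMR hM s hs
    obtain ⟨m, f, h1, h2, h3⟩ := hs
    exact hM s ⟨m, f, h1, fun i hi t ht => h2 i hi t (hMR ht), h3⟩
  have ivc_mono : ∀ (M R : Set (S → S → Prop)), M ⊆ R → R ⊆ 𝒯 →
      IsIVC I 𝒯 P M → IsIVC I 𝒯 P R :=
    fun M R h1 h2 hM => ⟨h2, holds_mono M R h1 hM.2⟩
  have key : ∀ i ≤ n, Sf i ⊆ 𝒯 ∧ IsIVC I 𝒯 P (Sf i) ∧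
      ∀ j : Fin n, (j : ℕ) < i → x j ∈ Sf i → ¬ IsIVC I 𝒯 P (Sf i \ {x j}) := by
    intro i
    induction i with
    | zero =>
      intro _
      refine ⟨by simp [h0], ⟨by simp [h0], by simpa [h0] using hTP⟩, ?_⟩
      intro j hj
      omega
    | succ i ih =>
      intro hi
      obtain ⟨hsub, hivc, hmin⟩ := ih (by omega)
      have hi' : i < n := hi
      have hs := hstep ⟨i, hi'⟩
      simp only [Fin.val_mk] at hs
      have hstep_sub : Sf (i + 1) ⊆ Sf i := by
        rw [hs]; split
        · exact fun t ht => ht.1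
        · exact fun t ht => ht
      have hsub' : Sf (i + 1) ⊆ 𝒯 := fun t ht => hsub (hstep_sub ht)
      have hivc' : IsIVC I 𝒯 P (Sf (i + 1)) := by
        rw [hs]; split
        · assumption
        · exact hivc
      refine ⟨hsub', hivc', ?_⟩
      intro j hj hmem hIVC
      rcases Nat.lt_succ_iff_lt_or_eq.mp hj with hj' | hj'
      · -- j < i : propagate old invariant
        refine hmin j hj' (hstep_sub hmem) ?_
        refine ivc_mono _ _ ?_ (fun t ht => hsub ht.1) hIVC
        exact fun t ht => ⟨hstep_sub ht.1, ht.2⟩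
      · -- j = i
        have hjeq : j = ⟨i, hi'⟩ := Fin.ext hj'
        subst hjeq
        rw [hs] at hmem hIVC
        by_cases hc : IsIVC I 𝒯 P (Sf i \ {x ⟨i, hi'⟩})
        · rw [if_pos hc] at hmem
          exact hmem.2 rfl
        · rw [if_neg hc] at hIVC
          exact hc hIVC
      -- end
  obtain ⟨hsub, hivc, hmin⟩ := key n le_rfl
  refine ⟨hivc, ?_⟩
  intro M hM hMIVC
  have hMsub := hM.subset
  obtain ⟨t, htS, htM⟩ := Set.exists_of_ssubset hM
  have ht𝒯 : t ∈ Set.range x := hrange ▸ hsub htS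
  obtain ⟨j, rfl⟩ := ht𝒯
  refine hmin j j.isLt htS ?_
  refine ivc_mono M _ ?_ (fun u hu => hsub hu.1) hMIVC
  intro u hu
  exact ⟨hMsub hu, fun h => htM (h ▸ hu)⟩
end

section
/- Minimal inductive validity cores are not necessarily unique: over the state space Bool × Bool with states written (a,b), let I(a,b) = (a ∧ b), let t₁((a,b),(a',b')) = a', let t₂((a,b),(a',b')) = b', let 𝒯 = {t₁, t₂}, and let P(a,b) = (a ∨ b). Then (I,𝒯) ⊢ P, and both {t₁} and {t₂} are minimal inductive validity cores for (I,𝒯) ⊢ P; in particular there exist two distinct minimal inductive validity cores for the same verification problem. -/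
/-- Minimal inductive validity cores are not necessarily unique. -/
theorem min_ivc_not_unique :
    let I : Bool × Bool → Prop := fun p => p.1 = true ∧ p.2 = true
    let t₁ : Bool × Bool → Bool × Bool → Prop := fun _ p' => p'.1 = true
    let t₂ : Bool × Bool → Bool × Bool → Prop := fun _ p' => p'.2 = true
    let 𝒯 : Set (Bool × Bool → Bool × Bool → Prop) := {t₁, t₂}
    let P : Bool × Bool → Prop := fun p => p.1 = true ∨ p.2 = true
    Holds I (conjT 𝒯) P ∧
    IsMinIVC I 𝒯 P {t₁} ∧ IsMinIVC I 𝒯 P {t₂} ∧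
    ∃ A B : Set (Bool × Bool → Bool × Bool → Prop),
      A ≠ B ∧ IsMinIVC I 𝒯 P A ∧ IsMinIVC I 𝒯 P B := by

  intro I t₁ t₂ 𝒯 P
  have ht12 : t₁ ≠ t₂ := by
    intro h
    have := congrFun (congrFun h (false, false)) (true, false)
    simp [t₁, t₂] at this
  have hempty : ¬ IsIVC I 𝒯 P (∅ : Set (Bool × Bool → Bool × Bool → Prop)) := by
    rintro ⟨-, h⟩
    have : P (false, false) := by
      apply h
      exact ⟨1, fun i => if i = 0 then (true, true) else (false, false),
        by simp [I], fun i _ t ht => absurd ht (Set.notMem_empty t), by simp⟩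
    simp [P] at this
  have h1 : Holds I (conjT {t₁}) P := by
    rintro s ⟨n, f, hI, hT, rfl⟩
    cases n with
    | zero => exact Or.inl hI.1
    | succ n => exact Or.inl (hT n (Nat.lt_succ_self n) t₁ rfl)
  have h2 : Holds I (conjT {t₂}) P := by
    rintro s ⟨n, f, hI, hT, rfl⟩
    cases n with
    | zero => exact Or.inr hI.2
    | succ n => exact Or.inr (hT n (Nat.lt_succ_self n) t₂ rfl)
  have m1 : IsMinIVC I 𝒯 P {t₁} := by
    refine ⟨⟨by intro x hx; exact Or.inl hx, h1⟩, ?_⟩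
    intro M hM
    rw [Set.ssubset_singleton_iff] at hM
    subst hM; exact hempty
  have m2 : IsMinIVC I 𝒯 P {t₂} := by
    refine ⟨⟨by intro x hx; exact Or.inr hx, h2⟩, ?_⟩
    intro M hM
    rw [Set.ssubset_singleton_iff] at hM
    subst hM; exact hempty
  have hall : Holds I (conjT 𝒯) P := by
    rintro s ⟨n, f, hI, hT, rfl⟩
    cases n with
    | zero => exact Or.inl hI.1
    | succ n => exact Or.inl (hT n (Nat.lt_succ_self n) t₁ (Or.inl rfl))
  exact ⟨hall, m1, m2, {t₁}, {t₂}, by simpa using ht12, m1, m2⟩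
end

section
/- First claim in the proof of Theorem 1: for any transition system (I,T) over a state space S and any safety property P, the constructed system satisfies the constructed property, i.e. (I', {T₁, T₂}) ⊢ Q, where the transition predicate is the conjunction of T₁ and T₂. -/
/-- First claim in the proof of Theorem 1: the constructed system satisfies the
constructed property. -/
theorem constructed_system_satisfies {S : Type*} (I : S → Prop) (T : S → S → Prop)
    (P : S → Prop) :
    let I' : S × Bool × Bool → Prop := fun p => I p.1 ∧ p.2.1 = false
    let T₁ : S × Bool × Bool → S × Bool × Bool → Prop :=
      fun _ p' => p'.2.1 = true → p'.2.2 = true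
    let T₂ : S × Bool × Bool → S × Bool × Bool → Prop :=
      fun p p' => (p'.2.2 = true → P p'.1) ∧ T p.1 p'.1
    let Q : S × Bool × Bool → Prop := fun p => p.2.1 = true → P p.1
    Holds I' (conjT {T₁, T₂}) Q := by
  intro I' T₁ T₂ Q s hs
  obtain ⟨n, f, hI, hT, hfn⟩ := hs
  cases n with
  | zero =>
    intro hx
    rw [hfn] at hI
    rw [hI.2] at hx
    exact absurd hx (by simp)
  | succ m =>
    intro hx
    have h := hT m (Nat.lt_succ_self m)
    rw [hfn] at h
    have h1 : T₁ (f m) s := h T₁ (Set.mem_insert _ _)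
    have h2 : T₂ (f m) s := h T₂ (Set.mem_insert_of_mem _ rfl)
    exact h2.1 (h1 hx)
end

section
/- Second claim in the proof of Theorem 1: let (I,T) be a transition system over a state space S and P a safety property such that some state satisfies I and some state falsifies P (P is not a tautology). Then {T₁} alone is not an inductive validity core for the constructed problem; that is, (I', T₁) ⊢ Q fails, where the transition predicate of the system is T₁ alone. -/
/-- Second claim in the proof of Theorem 1: `{T₁}` alone is not an inductive
validity core for the constructed problem. -/
theorem t1_alone_not_ivc {S : Type*} (I : S → Prop) (T : S → S → Prop)
    (P : S → Prop) (hI : ∃ s, I s) (hP : ∃ s, ¬ P s) :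
    let I' : S × Bool × Bool → Prop := fun p => I p.1 ∧ p.2.1 = false
    let T₁ : S × Bool × Bool → S × Bool × Bool → Prop :=
      fun _ p' => p'.2.1 = true → p'.2.2 = true
    let Q : S × Bool × Bool → Prop := fun p => p.2.1 = true → P p.1
    ¬ Holds I' T₁ Q := by
  intro I' T₁ Q h
  obtain ⟨s0, hs0⟩ := hI
  obtain ⟨sb, hsb⟩ := hP
  have := h (sb, true, true) ⟨1, fun i => if i = 0 then (s0, false, false) else (sb, true, true),
    by simpa [I'] using hs0, by intro i hi; interval_cases i; simp [T₁], by simp⟩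
  exact hsb (this rfl)
end

section
/- Reduction from model checking to IVC-minimality checking (Theorem 1): let (I,T) be a transition system over a state space S and P a safety property such that some state satisfies I, some state falsifies P (P is not a tautology), and every state satisfying I satisfies P. Then the set {T₁, T₂} is an inductive validity core for (I', {T₁,T₂}) ⊢ Q, and it is a minimal inductive validity core if and only if (I,T) ⊢ P does not hold. -/
/-- Theorem 1: reduction from model checking to IVC-minimality checking. -/
theorem minimality_as_hard_as_model_checking {S : Type*} (I : S → Prop)
    (T : S → S → Prop) (P : S → Prop)
    (hI : ∃ s, I s) (hP : ∃ s, ¬ P s) (hIP : ∀ s, I s → P s) :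
    let I' : S × Bool × Bool → Prop := fun p => I p.1 ∧ p.2.1 = false
    let T₁ : S × Bool × Bool → S × Bool × Bool → Prop :=
      fun _ p' => p'.2.1 = true → p'.2.2 = true
    let T₂ : S × Bool × Bool → S × Bool × Bool → Prop :=
      fun p p' => (p'.2.2 = true → P p'.1) ∧ T p.1 p'.1
    let Q : S × Bool × Bool → Prop := fun p => p.2.1 = true → P p.1
    let 𝒯 : Set (S × Bool × Bool → S × Bool × Bool → Prop) := {T₁, T₂}
    IsIVC I' 𝒯 Q 𝒯 ∧ (IsMinIVC I' 𝒯 Q 𝒯 ↔ ¬ Holds I T P) := by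
  intro I' T₁ T₂ Q 𝒯
  obtain ⟨s0, hs0⟩ := hI
  obtain ⟨sb, hsb⟩ := hP
  -- T₁ and T₂ are distinct relations
  have hne : T₁ ≠ T₂ := by
    intro h
    by_cases hT : ∃ s s', T s s'
    · obtain ⟨s, s', hss⟩ := hT
      have h1 : T₁ (s, false, false) (s', true, false) := by
        rw [h]
        exact ⟨fun hf => absurd hf (by simp), hss⟩
      simpa using h1 rfl
    · push_neg at hT
      have h1 : T₂ (s0, false, false) (s0, false, false) := by
        rw [← h]; intro hx; simp at hx
      exact hT s0 s0 h1.2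
  -- the full set is an IVC
  have hIVC : IsIVC I' 𝒯 Q 𝒯 := by
    refine ⟨subset_rfl, ?_⟩
    rintro p ⟨n, f, hI0, hstep, hfn⟩
    cases n with
    | zero =>
      subst hfn; intro hx; rw [hI0.2] at hx; simp at hx
    | succ m =>
      subst hfn
      have h := hstep m (Nat.lt_succ_self m)
      have h1 := h T₁ (Or.inl rfl)
      have h2 := h T₂ (Or.inr rfl)
      intro hx
      exact h2.1 (h1 hx)
  refine ⟨hIVC, fun hmin hhold => ?_, fun hnh => ⟨hIVC, ?_⟩⟩
  · -- minimal → ¬ Holds : show {T₂} is a proper IVC if Holds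
    refine hmin.2 {T₂} ?_ ⟨?_, ?_⟩
    · constructor
      · intro t ht; rw [Set.mem_singleton_iff] at ht; exact ht ▸ Or.inr rfl
      · intro hsub
        have := hsub (Or.inl rfl : T₁ ∈ 𝒯)
        rw [Set.mem_singleton_iff] at this
        exact hne this
    · intro t ht; rw [Set.mem_singleton_iff] at ht; exact ht ▸ Or.inr rfl
    · rintro p ⟨n, f, hI0, hstep, hfn⟩
      intro _
      have hreach : Reachable I T p.1 := by
        refine ⟨n, fun i => (f i).1, hI0.1, ?_, congrArg Prod.fst hfn⟩
        intro i hi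
        exact (hstep i hi T₂ rfl).2
      exact hhold p.1 hreach
  · -- ¬ Holds → no proper subset is an IVC
    intro M hM hMIVC
    by_cases hT2 : T₂ ∈ M
    · -- then T₁ ∉ M; use a failing run from ¬ Holds
      have hT1 : T₁ ∉ M := by
        intro hT1
        have : 𝒯 ⊆ M := by
          intro t ht
          rcases ht with h | h
          · exact h ▸ hT1
          · rw [Set.mem_singleton_iff] at h; exact h ▸ hT2
        exact absurd (Set.Subset.antisymm hM.1 this) hM.ne
      rw [Holds, not_forall] at hnh
      obtain ⟨sstar, hsnp⟩ := hnh
      rw [Classical.not_imp] at hsnp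
      obtain ⟨⟨n, g, hg0, hgs, hgn⟩, hnp⟩ := hsnp
      have hn0 : n ≠ 0 := by
        intro h; subst h; exact hnp (hgn ▸ hIP _ hg0)
      set f : ℕ → S × Bool × Bool := fun i => (g i, if i = n then true else false, false) with hf
      have : Q (f n) := by
        refine hMIVC.2 (f n) ⟨n, f, ?_, ?_, rfl⟩
        · exact ⟨hg0, by simp [hf, Ne.symm hn0]⟩
        · intro i hi t ht
          rcases hM.1 ht with h | h
          · exact absurd (h ▸ ht) hT1
          · rw [Set.mem_singleton_iff] at h
            subst h
            exact ⟨fun hc => by simp at hc, hgs i hi⟩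
      have := this (by simp [hf])
      rw [hf] at this
      exact hnp (hgn ▸ this)
    · -- T₂ ∉ M : jump straight to the bad state
      set f : ℕ → S × Bool × Bool := fun i => if i = 0 then (s0, false, false) else (sb, true, true) with hf
      have : Q (f 1) := by
        refine hMIVC.2 (f 1) ⟨1, f, ?_, ?_, rfl⟩
        · exact ⟨by simpa [hf] using hs0, by simp [hf]⟩
        · intro i hi t ht
          rcases hM.1 ht with h | h
          · subst h; intro _; simp [hf]
          · rw [Set.mem_singleton_iff] at h
            exact absurd (h ▸ ht) hT2
      exact hsb (by simpa [hf] using this (by simp [hf]))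
end

section
/- Soundness of k-induction: let (I,T) be a transition system over a state space S, P a safety property, and k ≥ 1. If P is k-inductive for (I,T) — that is, the k base-case checks and the inductive-step check all hold — then (I,T) ⊢ P, i.e. every reachable state satisfies P. -/
/-- `P` is `k`-inductive for `(I, T)`: `k` base-case checks and one inductive step. -/
def KInductive {S : Type*} (I : S → Prop) (T : S → S → Prop) (P : S → Prop) (k : ℕ) : Prop :=
  (∀ j < k, ∀ f : ℕ → S, I (f 0) → (∀ i < j, T (f i) (f (i + 1))) → P (f j)) ∧
  (∀ f : ℕ → S, (∀ i < k, T (f i) (f (i + 1))) → (∀ i < k, P (f i)) → P (f k))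

/-- Soundness of k-induction. -/
theorem k_induction_sound {S : Type*} (I : S → Prop) (T : S → S → Prop) (P : S → Prop)
    (k : ℕ) (hk : 1 ≤ k) (hind : KInductive I T P k) :
    Holds I T P := by
  obtain ⟨hbase, hstep⟩ := hind
  have key : ∀ n : ℕ, ∀ f : ℕ → S, I (f 0) → (∀ i < n, T (f i) (f (i + 1))) → P (f n) := by
    intro n
    induction n using Nat.strong_induction_on with
    | _ n ih =>
      intro f hI hT
      by_cases h : n < k
      · exact hbase n h f hI hT
      · push_neg at h
        have := hstep (fun i => f (n - k + i))
          (fun i hi => by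
            have : n - k + i < n := by omega
            have ht := hT (n - k + i) this
            simpa [Nat.add_assoc] using ht)
          (fun i hi => by
            exact ih (n - k + i) (by omega) (fun j => f j) hI
              (fun j hj => hT j (by omega)))
        have hnk : n - k + k = n := by omega
        simpa [hnk] using this
  intro s ⟨n, f, hI, hT, hfn⟩
  exact hfn ▸ key n f hI hT
end

section
/- Soundness of MinimizeIvc: let 𝒯 be a set of transition conjuncts over a state space S with (I,𝒯) ⊢ P, let R ⊆ 𝒯, and suppose that for some k ≥ 1 the property P is k-inductive for the system (I, ⋀R) whose transition predicate is the conjunction of the elements of R. Then R is an inductive validity core for (I,𝒯) ⊢ P. -/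
/-- Soundness of MinimizeIvc. -/
theorem minimize_ivc_sound {S : Type*} (I : S → Prop) (𝒯 : Set (S → S → Prop)) (P : S → Prop)
    (hTP : Holds I (conjT 𝒯) P)
    (R : Set (S → S → Prop)) (hR : R ⊆ 𝒯)
    (k : ℕ) (hk : 1 ≤ k) (hind : KInductive I (conjT R) P k) :
    IsIVC I 𝒯 P R := by
  refine ⟨hR, ?_⟩
  obtain ⟨hbase, hstep⟩ := hind
  have key : ∀ n : ℕ, ∀ f : ℕ → S, I (f 0) → (∀ i < n, conjT R (f i) (f (i + 1))) → P (f n) := by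
    intro n
    induction n using Nat.strong_induction_on with
    | _ n ih =>
      intro f hI hT
      rcases lt_or_ge n k with h | h
      · exact hbase n h f hI hT
      · have hg : P (f (n - k + k)) := by
          apply hstep (fun i => f (n - k + i))
          · intro i hi
            have : n - k + i < n := by omega
            exact hT _ this
          · intro i hi
            exact ih (n - k + i) (by omega) f hI (fun j hj => hT j (by omega))
        have : n - k + k = n := by omega
        rwa [this] at hg
  rintro s ⟨n, f, hI, hT, rfl⟩
  exact key n f hI hT
end

section
/- Soundness of joint invariant strengthening (underlying ReduceInvariants): let (I,T) be a transition system over a state space S, let k ≥ 1, and let R be a finite set of state predicates such that (I,T) ⊢ Q for every Q ∈ R, and such that the joint inductive step holds: for every sequence s₀,…,s_k with T sᵢ sᵢ₊₁ for all i < k, if every Q ∈ R holds at every sᵢ with i < k, then every Q ∈ R holds at s_k. Then the conjunction of the predicates in R is k-inductive for (I,T). -/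
/-- Soundness of joint invariant strengthening (underlying ReduceInvariants). -/
theorem reduce_invariants_sound {S : Type*} (I : S → Prop) (T : S → S → Prop)
    (k : ℕ) (hk : 1 ≤ k)
    (R : Set (S → Prop)) (hfin : R.Finite)
    (hinv : ∀ Q ∈ R, Holds I T Q)
    (hjoint : ∀ f : ℕ → S, (∀ i < k, T (f i) (f (i + 1))) →
      (∀ i < k, ∀ Q ∈ R, Q (f i)) → ∀ Q ∈ R, Q (f k)) :
    KInductive I T (fun s => ∀ Q ∈ R, Q s) k := by
  constructor
  · intro j _ f hI hT Q hQ
    exact hinv Q hQ (f j) ⟨j, f, hI, hT, rfl⟩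
  · intro f hT hP Q hQ
    exact hjoint f hT (fun i hi Q hQ => hP i hi Q hQ) Q hQ
end
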